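/- Let f : M → M be a continuous map of a compact metric space (M,d), μ an ergodic f-invariant Borel probability measure, and B : M → M(d,ℝ) a continuous map such that λ₁(B,μ) = −∞, where λ₁(B,ν) := inf_{n≥1} (1/n)∫ log‖Bⁿ(x)‖ dν(x) ∈ [−∞,∞) for any f-invariant Borel probability measure ν. If (μ_j)_{j∈ℕ} is a sequence of ergodic f-invariant Borel probability measures converging to μ in the weak* topology, then limsup_{j→∞} λ₁(B,μ_j) = −∞, i.e. λ₁(B,μ_j) → −∞ as j → ∞. -/

import Mathlib

open Filter MeasureTheory Topology

/-- Operator norm (w.r.t. the Euclidean norm) of a square real matrix. -/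
noncomputable def matNorm {m : Type*} [Fintype m] [DecidableEq m] (B : Matrix m m ℝ) : ℝ :=
  ‖LinearMap.toContinuousLinearMap (Matrix.toEuclideanLin B)‖

/-- The cocycle generated by `A` over `f`: `Aⁿ(x) = A(f^{n-1}x) ⋯ A(f x) A(x)`. -/
def cocycle {M : Type*} {m : Type*} [Fintype m] [DecidableEq m]
    (f : M → M) (A : M → Matrix m m ℝ) : ℕ → M → Matrix m m ℝ
  | 0, _ => 1
  | n + 1, x => cocycle f A n (f x) * A x

/-- `log` with values in `[-∞, ∞)`, with `log r = -∞` for `r ≤ 0`. -/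
noncomputable def elog (r : ℝ) : EReal := if r ≤ 0 then ⊥ else ((Real.log r : ℝ) : EReal)

/-- The integral `∫ log g dμ ∈ [-∞,∞)` of the `[-∞,∞)`-valued function `log ∘ g` (for `g ≥ 0`),
defined via monotone truncations. -/
noncomputable def elogIntegral {M : Type*} [MeasurableSpace M] (μ : Measure M) (g : M → ℝ) :
    EReal :=
  ⨅ m : ℕ, (((∫ x, (if g x ≤ 0 then -(m : ℝ) else max (Real.log (g x)) (-(m : ℝ))) ∂μ) : ℝ) : EReal)

/-- The largest Lyapunov exponent `λ₁(A,μ) = inf_{n ≥ 1} (1/n) ∫ log ‖Aⁿ(x)‖ dμ(x) ∈ [-∞,∞)`. -/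
noncomputable def lyapMax {M : Type*} [MeasurableSpace M] {m : Type*} [Fintype m] [DecidableEq m]
    (f : M → M) (A : M → Matrix m m ℝ) (μ : Measure M) : EReal :=
  ⨅ n : ℕ, (((((n : ℝ) + 1)⁻¹ : ℝ)) : EReal) *
    elogIntegral μ (fun x => matNorm (cocycle f A (n + 1) x))

/-- The spectral radius of a real square matrix: the largest modulus of its complex
eigenvalues. -/
noncomputable def specRad {m : Type*} [Fintype m] [DecidableEq m] (B : Matrix m m ℝ) : ℝ :=
  sSup ((fun z : ℂ => ‖z‖) '' spectrum ℂ (B.map (fun r => (r : ℂ))))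

/-- The largest Lyapunov exponent of the cocycle at a periodic point of period `n`:
`(1/n) log (spectral radius of Aⁿ(p)) ∈ [-∞,∞)`. -/
noncomputable def lyapMaxPeriodic {M : Type*} {m : Type*} [Fintype m] [DecidableEq m]
    (f : M → M) (A : M → Matrix m m ℝ) (n : ℕ) (p : M) : EReal :=
  (((n : ℝ)⁻¹ : ℝ) : EReal) * elog (specRad (cocycle f A n p))

/-- The Anosov Closing property for a map of a metric space. -/
def AnosovClosing {M : Type*} [MetricSpace M] (f : M → M) : Prop :=
  ∃ C₁ ε₀ θ : ℝ, 0 < C₁ ∧ 0 < ε₀ ∧ 0 < θ ∧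
    ∀ (z : M) (n : ℕ), dist (f^[n] z) z < ε₀ →
      ∃ p : M, f^[n] p = p ∧ ∀ j ≤ n,
        dist (f^[j] z) (f^[j] p) ≤
          C₁ * Real.exp (-θ * min (j : ℝ) ((n : ℝ) - (j : ℝ))) * dist (f^[n] z) z

/-- `A` is `α`-Hölder continuous (w.r.t. the operator norm on matrices). -/
def IsHolderMat {M : Type*} [MetricSpace M] {m : Type*} [Fintype m] [DecidableEq m]
    (A : M → Matrix m m ℝ) (α : ℝ) : Prop :=
  ∃ C₂ : ℝ, 0 < C₂ ∧ ∀ x y : M, matNorm (A x - A y) ≤ C₂ * dist x y ^ α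

/-- The `i`-th compound (exterior power) matrix of `B`: the matrix of `ΛⁱB` acting on
`Λⁱ(ℝ^d)` in the standard basis of increasing wedges of basis vectors. -/
noncomputable def compound {d : ℕ} (i : ℕ) (B : Matrix (Fin d) (Fin d) ℝ) :
    Matrix {s : Finset (Fin d) // s.card = i} {s : Finset (Fin d) // s.card = i} ℝ :=
  Matrix.of fun S T => Matrix.det (Matrix.of fun a b : Fin i =>
    B (S.1.orderIsoOfFin S.2 a).1 (T.1.orderIsoOfFin T.2 b).1)

/-!
`λ₁(B, ν)` is the infimum over `n` and truncation levels `m` of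
`(n+1)⁻¹ ∫ log (max ‖Bⁿ⁺¹‖ e⁻ᵐ) dν`. Each of these is the integral of a continuous function,
hence weak* continuous in `ν`, and an infimum of continuous functions is upper semicontinuous:
once one of them is below `K` at `μ`, it stays below `K` at `μ_j` for large `j`.
-/

lemma EReal.coe_mul_iInf_of_pos {ι : Sort*} {c : ℝ} (hc : 0 < c) (x : ι → EReal) :
    (c : EReal) * ⨅ i, x i = ⨅ i, (c : EReal) * x i :=
  have hc0 : (c : EReal) ≠ 0 := EReal.coe_ne_zero.2 hc.ne'
  Monotone.map_iInf_of_continuousAt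
    ((EReal.continuousAt_mul (.inl hc0) (.inl hc0) (.inl (EReal.coe_ne_bot c))
      (.inl (EReal.coe_ne_top c))).comp
      (continuous_const.prodMk continuous_id).continuousAt)
    (fun _ _ h => mul_le_mul_of_nonneg_left h (by exact_mod_cast hc.le))
    (EReal.coe_mul_top_of_pos hc)

lemma tendsto_iInf_nhds_bot {α ι β : Type*} [CompleteLinearOrder α] [TopologicalSpace α]
    [OrderTopology α] {l : Filter β} {u : β → ι → α} {v : ι → α}
    (hu : ∀ i, Tendsto (fun b => u b i) l (𝓝 (v i))) (hv : ⨅ i, v i = ⊥) :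
    Tendsto (fun b => ⨅ i, u b i) l (𝓝 ⊥) := by
  refine tendsto_order.2 ⟨fun a ha => (not_lt_bot ha).elim, fun a ha => ?_⟩
  obtain ⟨i, hi⟩ := iInf_lt_iff.1 (hv ▸ ha)
  filter_upwards [(hu i).eventually_lt_const hi] with b hb
  exact (iInf_le _ i).trans_lt hb

noncomputable def truncLog (a r : ℝ) : ℝ := Real.log (max r (Real.exp (-a)))

lemma continuous_truncLog (a : ℝ) : Continuous (truncLog a) :=
  (continuous_id.max continuous_const).log
    fun r => ((Real.exp_pos _).trans_le (le_max_right r _)).ne'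

lemma ite_log_eq_truncLog (a r : ℝ) :
    (if r ≤ 0 then -a else max (Real.log r) (-a)) = truncLog a r := by
  unfold truncLog
  split_ifs with hr
  · rw [max_eq_right (hr.trans (Real.exp_pos _).le), Real.log_exp]
  · rcases le_total r (Real.exp (-a)) with hle | hle
    · rw [max_eq_right hle, Real.log_exp, max_eq_right]
      simpa using Real.log_le_log (not_le.1 hr) hle
    · rw [max_eq_left hle, max_eq_left]
      simpa using Real.log_le_log (Real.exp_pos _) hle

lemma elogIntegral_eq_iInf {M : Type*} [MeasurableSpace M] (μ : Measure M) (g : M → ℝ) :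
    elogIntegral μ g = ⨅ m : ℕ, ((∫ x, truncLog m (g x) ∂μ : ℝ) : EReal) := by
  simp only [elogIntegral, ite_log_eq_truncLog]

lemma lyapMax_eq_iInf {M : Type*} [MeasurableSpace M] {m : Type*} [Fintype m] [DecidableEq m]
    (f : M → M) (A : M → Matrix m m ℝ) (μ : Measure M) :
    lyapMax f A μ = ⨅ p : ℕ × ℕ, ((((p.1 : ℝ) + 1)⁻¹ *
      ∫ x, truncLog p.2 (matNorm (cocycle f A (p.1 + 1) x)) ∂μ : ℝ) : EReal) := by
  simp only [lyapMax, elogIntegral_eq_iInf, iInf_prod, EReal.coe_mul]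
  exact iInf_congr fun n => EReal.coe_mul_iInf_of_pos (by positivity) _

lemma continuous_matNorm {m : Type*} [Fintype m] [DecidableEq m] :
    Continuous fun B : Matrix m m ℝ => matNorm B :=
  continuous_norm.comp <| LinearMap.continuous_of_finiteDimensional
    ((LinearMap.toContinuousLinearMap : _ ≃ₗ[ℝ] _).toLinearMap.comp
      (Matrix.toEuclideanLin : Matrix m m ℝ ≃ₗ[ℝ] _).toLinearMap)

lemma continuous_cocycle {M : Type*} [TopologicalSpace M] {m : Type*} [Fintype m] [DecidableEq m]
    {f : M → M} (hf : Continuous f) {A : M → Matrix m m ℝ} (hA : Continuous A) (n : ℕ) :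
    Continuous (cocycle f A n) := by
  induction n with
  | zero => exact continuous_const
  | succ n ih => exact (ih.comp hf).matrix_mul hA

theorem top_lyapunov_exponent_tendsto_bot_of_weak_star_general
    {d : ℕ} {M : Type*} [MetricSpace M] [MeasurableSpace M]
    (f : M → M) (hf : Continuous f)
    (μ : Measure M)
    (B : M → Matrix (Fin d) (Fin d) ℝ) (hB : Continuous B)
    (hbot : lyapMax f B μ = ⊥)
    (μs : ℕ → Measure M)
    (hweak : ∀ ψ : M → ℝ, Continuous ψ →
      Tendsto (fun j => ∫ x, ψ x ∂(μs j)) atTop (𝓝 (∫ x, ψ x ∂μ))) :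
    Tendsto (fun j => lyapMax f B (μs j)) atTop (𝓝 (⊥ : EReal)) := by
  simp only [lyapMax_eq_iInf] at hbot ⊢
  refine tendsto_iInf_nhds_bot (fun p => ?_) hbot
  have hψ : Continuous fun x => truncLog p.2 (matNorm (cocycle f B (p.1 + 1) x)) :=
    (continuous_truncLog _).comp (continuous_matNorm.comp (continuous_cocycle hf hB _))
  exact (continuous_coe_real_ereal.tendsto _).comp ((hweak _ hψ).const_mul _)

/-- **Proposition (upper semicontinuity at a measure with `λ₁ = -∞`).**
Let `f` be a continuous map of a compact metric space, `μ` an ergodic `f`-invariant Borel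
probability measure and `B` a continuous matrix-valued map with `λ₁(B,μ) = -∞`. If `(μ j)`
is a sequence of ergodic `f`-invariant Borel probability measures converging to `μ` in the
weak* topology, then `λ₁(B, μ j) → -∞`. -/
theorem top_lyapunov_exponent_tendsto_bot_of_weak_star
    {d : ℕ} {M : Type*} [MetricSpace M] [CompactSpace M] [MeasurableSpace M] [BorelSpace M]
    (f : M → M) (hf : Continuous f)
    (μ : Measure M) [IsProbabilityMeasure μ] (hErg : Ergodic f μ)
    (B : M → Matrix (Fin d) (Fin d) ℝ) (hB : Continuous B)
    (hbot : lyapMax f B μ = ⊥)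
    (μs : ℕ → Measure M) (hprob : ∀ j, IsProbabilityMeasure (μs j))
    (hergs : ∀ j, Ergodic f (μs j))
    (hweak : ∀ ψ : M → ℝ, Continuous ψ →
      Tendsto (fun j => ∫ x, ψ x ∂(μs j)) atTop (𝓝 (∫ x, ψ x ∂μ))) :
    Tendsto (fun j => lyapMax f B (μs j)) atTop (𝓝 (⊥ : EReal)) :=
  top_lyapunov_exponent_tendsto_bot_of_weak_star_general f hf μ B hB hbot μs hweak
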